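/- arXiv:1211.3847 — 5 statements merged into one kernel-verified Lean document; each statement's English description precedes it below -/
import Mathlib

section
/- Let F be a POVM on a measurable space X with values in a complex Hilbert space H. Then F is uniformly continuous if and only if for every decreasing sequence of measurable sets Δ_i with ⋂_i Δ_i = ∅, one has ‖F(Δ_i)‖ → 0 as i → ∞. -/
open MeasureTheory Filter Topology

/-- A positive-operator-valued measure on a measurable space `X`, with values in the
bounded operators on a complex Hilbert space `H`: each `F Δ` (for measurable `Δ`) is a
positive operator with `F Δ ≤ 1`, and `F` is countably additive in the weak operator
topology on pairwise disjoint measurable sets. -/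
structure POVM (X : Type*) [MeasurableSpace X] (H : Type*)
    [NormedAddCommGroup H] [InnerProductSpace ℂ H] [CompleteSpace H] where
  toFun : Set X → H →L[ℂ] H
  isPositive : ∀ Δ : Set X, MeasurableSet Δ → (toFun Δ).IsPositive
  le_one : ∀ Δ : Set X, MeasurableSet Δ → (1 - toFun Δ).IsPositive
  weak_additive : ∀ Δ : ℕ → Set X, (∀ n, MeasurableSet (Δ n)) →
    Pairwise (Function.onFun Disjoint Δ) → ∀ φ ψ : H,
      Tendsto (fun n => ∑ i ∈ Finset.range n, (inner ℂ φ (toFun (Δ i) ψ) : ℂ))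
        atTop (𝓝 (inner ℂ φ (toFun (⋃ n, Δ n) ψ) : ℂ))

/-- A POVM is uniformly continuous if on every pairwise disjoint sequence of measurable
sets the partial sums of the values converge to the value on the union in operator norm. -/
def POVM.UniformlyContinuous {X : Type*} [MeasurableSpace X] {H : Type*}
    [NormedAddCommGroup H] [InnerProductSpace ℂ H] [CompleteSpace H]
    (F : POVM X H) : Prop :=
  ∀ Δ : ℕ → Set X, (∀ n, MeasurableSet (Δ n)) → Pairwise (Function.onFun Disjoint Δ) →
    Tendsto (fun n => ∑ i ∈ Finset.range n, F.toFun (Δ i)) atTop (𝓝 (F.toFun (⋃ n, Δ n)))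

/-! Weak countable additivity splits `F (⋃ i, Δ i)` into the first `n` terms plus the value on
the tail `⋃ i, Δ (n + i)`. Uniform continuity is then exactly the statement that the values on
these tails tend to zero in norm. Tails of disjoint sequences decrease to `∅`, and conversely a
decreasing sequence `s` with empty intersection is the family of tails of the disjoint sequence
`s i \ s (i + 1)`. -/

section

open Set

variable {α : Type*}

theorem Antitone.pairwise_disjoint_sdiff_succ {s : ℕ → Set α} (hs : Antitone s) :
    Pairwise (Function.onFun Disjoint fun i => s i \ s (i + 1)) :=
  pairwise_disjoint_on _ |>.2 fun _ _ hij =>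
    disjoint_sdiff_left.mono_right (sdiff_subset.trans (hs hij))

theorem Antitone.iUnion_sdiff_succ_add {s : ℕ → Set α} (hs : Antitone s)
    (hempty : ⋂ i, s i = ∅) (n : ℕ) : ⋃ i, (s (n + i) \ s (n + i + 1)) = s n := by
  classical
  refine (iUnion_subset fun i => sdiff_subset.trans (hs (Nat.le_add_right n i))).antisymm
    fun x hx => ?_
  have hleave : ∃ k, x ∉ s (n + k) := by
    by_contra! hstay
    have : x ∈ ⋂ i, s i := mem_iInter.2 fun i => hs (Nat.le_add_left i n) (hstay i)
    simp [hempty] at this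
  obtain ⟨j, hj⟩ : ∃ j, Nat.find hleave = j + 1 :=
    Nat.exists_eq_add_one_of_ne_zero fun h0 => by simpa [h0, hx] using Nat.find_spec hleave
  refine mem_iUnion.2 ⟨j, ?_, ?_⟩
  · exact not_not.1 (Nat.find_min hleave (by omega))
  · simpa [hj, add_assoc] using Nat.find_spec hleave

theorem Set.antitone_iUnion_add (Δ : ℕ → Set α) : Antitone fun n => ⋃ i, Δ (n + i) :=
  fun m n hmn => iUnion_subset fun i =>
    subset_iUnion_of_subset (n - m + i) (by rw [← add_assoc, Nat.add_sub_cancel' hmn])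

theorem Set.iInter_iUnion_add_eq_empty {Δ : ℕ → Set α}
    (hd : Pairwise (Function.onFun Disjoint Δ)) : ⋂ n, ⋃ i, Δ (n + i) = ∅ := by
  refine eq_empty_iff_forall_notMem.2 fun x hx => ?_
  obtain ⟨i, hi⟩ := mem_iUnion.1 (mem_iInter.1 hx 0)
  obtain ⟨j, hj⟩ := mem_iUnion.1 (mem_iInter.1 hx (i + 1))
  exact disjoint_left.1 (hd (show 0 + i ≠ i + 1 + j by omega)) hi hj

end

namespace POVM

variable {X : Type*} [MeasurableSpace X] {H : Type*}
    [NormedAddCommGroup H] [InnerProductSpace ℂ H] [CompleteSpace H]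

theorem toFun_iUnion_eq_sum_range_add (F : POVM X H) {Δ : ℕ → Set X}
    (hm : ∀ i, MeasurableSet (Δ i)) (hd : Pairwise (Function.onFun Disjoint Δ)) (n : ℕ) :
    F.toFun (⋃ i, Δ i) = ∑ i ∈ Finset.range n, F.toFun (Δ i) + F.toFun (⋃ i, Δ (n + i)) := by
  ext ψ
  refine ext_inner_left ℂ fun φ => ?_
  have hall := (tendsto_add_atTop_iff_nat n).2 (F.weak_additive Δ hm hd φ ψ)
  have htail := F.weak_additive (fun i => Δ (n + i)) (fun i => hm _)
    (hd.comp_of_injective (add_right_injective n)) φ ψ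
  -- Partial sums over `range (n + m)` split into the first `n` terms and those of the tail.
  simp_rw [add_comm _ n, Finset.sum_range_add] at hall
  have hsplit := tendsto_nhds_unique hall (tendsto_const_nhds.add htail)
  simp [hsplit, inner_add_right, inner_sum]

end POVM

/-- A POVM is uniformly continuous iff for every decreasing sequence of measurable sets
`Δi` with empty intersection, `‖F (Δi i)‖ → 0`. -/
theorem uniformlyContinuous_iff_tendsto_on_decreasing
    {X : Type*} [MeasurableSpace X] {H : Type*}
    [NormedAddCommGroup H] [InnerProductSpace ℂ H] [CompleteSpace H]
    (F : POVM X H) :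
    F.UniformlyContinuous ↔
      ∀ Δi : ℕ → Set X, (∀ i, MeasurableSet (Δi i)) → Antitone Δi →
        (⋂ i, Δi i) = ∅ →
        Tendsto (fun i => ‖F.toFun (Δi i)‖) atTop (𝓝 0) := by
  constructor
  · intro hF s hm hs hempty
    have hmE : ∀ i, MeasurableSet (s i \ s (i + 1)) := fun i => (hm i).diff (hm (i + 1))
    have hdE := hs.pairwise_disjoint_sdiff_succ
    have hunion : ⋃ i, (s i \ s (i + 1)) = s 0 := by
      simpa using hs.iUnion_sdiff_succ_add hempty 0
    have hsplit (n : ℕ) :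
        F.toFun (s n) = F.toFun (s 0) - ∑ i ∈ Finset.range n, F.toFun (s i \ s (i + 1)) := by
      rw [eq_sub_iff_add_eq', ← hs.iUnion_sdiff_succ_add hempty n, ← hunion]
      exact (F.toFun_iUnion_eq_sum_range_add hmE hdE n).symm
    have hsums := hF _ hmE hdE
    rw [hunion] at hsums
    simpa [← hsplit] using ((tendsto_const_nhds (x := F.toFun (s 0))).sub hsums).norm
  · intro h Δ hm hd
    rw [tendsto_iff_norm_sub_tendsto_zero]
    refine (h _ (fun n => .iUnion fun i => hm _) (Set.antitone_iUnion_add Δ)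
      (Set.iInter_iUnion_add_eq_empty hd)).congr fun n => ?_
    rw [F.toFun_iUnion_eq_sum_range_add hm hd n, sub_add_cancel_left, norm_neg]
end

section
/- Let X be a metrizable second-countable topological space, H a complex Hilbert space, and F a POVM on the Borel sets of X with values in H that is uniformly continuous. If F has the norm-1 property, then for every point x in the spectrum σ(F) one has F({x}) ≠ 0 (equivalently ‖F({x})‖ ≠ 0). -/
open MeasureTheory Filter Topology

/-- The norm-1 property of a POVM: every measurable set with nonzero value has value of
operator norm one. -/
def POVM.Norm1Property {X : Type*} [MeasurableSpace X] {H : Type*}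
    [NormedAddCommGroup H] [InnerProductSpace ℂ H] [CompleteSpace H]
    (F : POVM X H) : Prop :=
  ∀ Δ : Set X, MeasurableSet Δ → F.toFun Δ ≠ 0 → ‖F.toFun Δ‖ = 1

/-- The spectrum of a POVM on a topological space: the points all of whose open
neighbourhoods have nonzero value. -/
def POVM.spectrum {X : Type*} [TopologicalSpace X] [MeasurableSpace X] {H : Type*}
    [NormedAddCommGroup H] [InnerProductSpace ℂ H] [CompleteSpace H]
    (F : POVM X H) : Set X :=
  {x | ∀ Δ : Set X, IsOpen Δ → x ∈ Δ → F.toFun Δ ≠ 0}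

/-!
If `F {x} = 0`, pick a decreasing basis `U n` of open neighbourhoods of `x`, so that
`⋂ n, U n = {x}`. Norm convergence of `F` on disjoint sequences gives continuity from above in
operator norm, hence `F (U n) → F {x} = 0`; but `x` lies in the spectrum, so every `F (U n)` is
nonzero and therefore has norm one.
-/

open Set

namespace POVM

variable {X : Type*} [MeasurableSpace X] {H : Type*} [NormedAddCommGroup H]
  [InnerProductSpace ℂ H] [CompleteSpace H] (F : POVM X H)

theorem toFun_empty : F.toFun ∅ = 0 := by
  ext ψ
  refine ext_inner_left ℂ fun φ => ?_
  have h := F.weak_additive (fun _ => ∅) (fun _ => .empty) (fun _ _ _ => disjoint_empty _) φ ψ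
  simp only [Finset.sum_const, Finset.card_range, iUnion_empty] at h
  -- the partial sums `n • c` converge, so their increments `c` tend to `0`
  have := ((tendsto_add_atTop_iff_nat 1).mpr h).sub h
  simpa [add_smul, tendsto_const_nhds_iff] using this

theorem toFun_union {A B : Set X} (hA : MeasurableSet A) (hB : MeasurableSet B)
    (hAB : Disjoint A B) : F.toFun (A ∪ B) = F.toFun A + F.toFun B := by
  let Δ : ℕ → Set X := fun n => if n = 0 then A else if n = 1 then B else ∅
  have hΔ : ∀ n, MeasurableSet (Δ n) := by
    intro n
    dsimp only [Δ]
    split_ifs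
    exacts [hA, hB, .empty]
  have hdisj : Pairwise (Function.onFun Disjoint Δ) := by
    rintro (_ | _ | i) (_ | _ | j) hij <;> simp_all [Δ, Function.onFun, hAB.symm]
  have hU : ⋃ n, Δ n = A ∪ B := by
    ext y
    simp only [mem_iUnion, mem_union]
    refine ⟨?_, fun hy => hy.elim (⟨0, ·⟩) (⟨1, ·⟩)⟩
    rintro ⟨_ | _ | i, hi⟩ <;> simp_all [Δ]
  ext ψ
  refine ext_inner_left ℂ fun φ => ?_
  have h := F.weak_additive Δ hΔ hdisj φ ψ
  rw [hU, ← tendsto_add_atTop_iff_nat 2] at h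
  simp only [Finset.sum_range_succ', Δ, Nat.add_eq_zero_iff, one_ne_zero, and_false, ↓reduceIte,
    Nat.add_eq_right, F.toFun_empty, zero_apply, inner_zero_right, Finset.sum_const_zero, zero_add,
    tendsto_const_nhds_iff] at h
  rw [← h, add_apply, inner_add_right, add_comm]

theorem toFun_diff {A B : Set X} (hA : MeasurableSet A) (hB : MeasurableSet B) (hBA : B ⊆ A) :
    F.toFun (A \ B) = F.toFun A - F.toFun B := by
  rw [eq_sub_iff_add_eq, ← F.toFun_union (hA.diff hB) hB disjoint_sdiff_left,
    sdiff_union_of_subset hBA]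

variable {F}

theorem UniformlyContinuous.tendsto_toFun_of_monotone (hF : F.UniformlyContinuous)
    {B : ℕ → Set X} (hB : ∀ n, MeasurableSet (B n)) (hmono : Monotone B) :
    Tendsto (fun n => F.toFun (B n)) atTop (𝓝 (F.toFun (⋃ n, B n))) := by
  have hsum : ∀ n, ∑ i ∈ Finset.range (n + 1), F.toFun (disjointed B i) = F.toFun (B n) := by
    intro n
    induction n with
    | zero => simp [disjointed_zero]
    | succ n ih =>
      rw [Finset.sum_range_succ, ih, hmono.disjointed_add_one,
        F.toFun_diff (hB _) (hB _) (hmono (Nat.le_add_right n 1))]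
      abel
  have h := hF (disjointed B) (MeasurableSet.disjointed hB) (disjoint_disjointed B)
  rw [iUnion_disjointed, ← tendsto_add_atTop_iff_nat 1] at h
  simpa only [hsum] using h

theorem UniformlyContinuous.tendsto_toFun_of_antitone (hF : F.UniformlyContinuous)
    {A : ℕ → Set X} (hA : ∀ n, MeasurableSet (A n)) (hanti : Antitone A) :
    Tendsto (fun n => F.toFun (A n)) atTop (𝓝 (F.toFun (⋂ n, A n))) := by
  have hdiff := hF.tendsto_toFun_of_monotone (fun n => (hA 0).diff (hA n))
    (fun m n hmn => sdiff_subset_sdiff_right (hanti hmn))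
  rw [← sdiff_iInter] at hdiff
  have h := (tendsto_const_nhds (x := F.toFun (A 0))).sub hdiff
  rw [F.toFun_diff (hA 0) (.iInter hA) (iInter_subset _ 0), sub_sub_cancel] at h
  refine h.congr fun n => ?_
  rw [F.toFun_diff (hA 0) (hA n) (hanti n.zero_le), sub_sub_cancel]

end POVM

theorem norm1Property_imp_singleton_ne_zero_general
    {X : Type*} [TopologicalSpace X] [TopologicalSpace.MetrizableSpace X]
    [MeasurableSpace X] [BorelSpace X]
    {H : Type*} [NormedAddCommGroup H] [InnerProductSpace ℂ H] [CompleteSpace H]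
    (F : POVM X H) (hunif : F.UniformlyContinuous) (hnorm1 : F.Norm1Property) :
    ∀ x ∈ F.spectrum, F.toFun {x} ≠ 0 := by
  intro x hx hx0
  obtain ⟨U, hU, hUbasis⟩ := (nhds_basis_opens x).exists_antitone_subbasis
  have hUx : ⋂ n, U n = {x} := by simpa using biInter_basis_nhds hUbasis.toHasBasis
  have hlim := hunif.tendsto_toFun_of_antitone (fun n => (hU n).2.measurableSet)
    hUbasis.antitone
  rw [hUx, hx0] at hlim
  have hone : ∀ n, ‖F.toFun (U n)‖ = 1 := fun n =>
    hnorm1 _ (hU n).2.measurableSet (hx _ (hU n).2 (hU n).1)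
  simpa [hone] using hlim.norm

/-- Necessary condition for the norm-1 property: if a uniformly continuous POVM on a
metrizable second-countable space has the norm-1 property, then it is nonzero on every
singleton of a point of its spectrum. -/
theorem norm1Property_imp_singleton_ne_zero
    {X : Type*} [TopologicalSpace X] [TopologicalSpace.MetrizableSpace X]
    [SecondCountableTopology X] [MeasurableSpace X] [BorelSpace X]
    {H : Type*} [NormedAddCommGroup H] [InnerProductSpace ℂ H] [CompleteSpace H]
    (F : POVM X H) (hunif : F.UniformlyContinuous) (hnorm1 : F.Norm1Property) :
    ∀ x ∈ F.spectrum, F.toFun {x} ≠ 0 :=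
  norm1Property_imp_singleton_ne_zero_general F hunif hnorm1
end

section
/- Let F be a normalized POVM on the Borel sets of ℝ^n with values in a complex Hilbert space H, and suppose F is absolutely continuous with respect to Lebesgue measure, i.e., there is a constant c with ‖F(Δ)‖ ≤ c·λ(Δ) for all Borel Δ, where λ is Lebesgue measure on ℝ^n. Then F does not have the norm-1 property: there exists a Borel set Δ with F(Δ) ≠ 0 and ‖F(Δ)‖ < 1. -/
/-!
Lebesgue measure has no atoms and is outer regular, so every point has an open neighbourhood of
measure below `(c + 1)⁻¹`; by the Lindelöf property countably many of them cover `ℝⁿ`, and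
disjointing them gives a countable Borel partition of `ℝⁿ` into pieces of measure below
`(c + 1)⁻¹`. By countable additivity `F` cannot vanish on every piece, since `F ℝⁿ = 1 ≠ 0`;
on a piece where it does not vanish, absolute continuity gives `‖F Δ‖ ≤ c / (c + 1) < 1`.
-/

open MeasureTheory Filter Topology

open Set Function
open scoped ENNReal NNReal

section SmallPartition

variable {α : Type*} [TopologicalSpace α] [LindelofSpace α] [MeasurableSpace α]
  (μ : Measure α) [μ.OuterRegular] [NullSingletonClass μ]
  {ε : ℝ≥0∞}

theorem exists_open_cover_measure_lt (hε : 0 < ε) :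
    ∃ s : ℕ → Set α, (∀ k, IsOpen (s k)) ∧ (∀ k, μ (s k) < ε) ∧ ⋃ k, s k = univ := by
  rcases isEmpty_or_nonempty α with hα | hα
  · exact ⟨fun _ => ∅, fun _ => isOpen_empty, fun _ => by simpa using hε,
      (univ_eq_empty_iff.mpr hα).symm ▸ iUnion_empty⟩
  have hU : ∀ x : α, ∃ U ⊇ {x}, IsOpen U ∧ μ U < ε := fun x =>
    exists_isOpen_lt_of_lt {x} ε (by simpa using hε)
  choose U hxU hUo hUμ using hU
  obtain ⟨t, htc, htU⟩ := countable_cover_nhds fun x => (hUo x).mem_nhds (hxU x rfl)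
  obtain ⟨x, hx, -⟩ := nonempty_biUnion.mp (htU ▸ univ_nonempty : (⋃ x ∈ t, U x).Nonempty)
  obtain ⟨f, rfl⟩ := htc.exists_eq_range ⟨x, hx⟩
  exact ⟨fun k => U (f k), fun k => hUo _, fun k => hUμ _, by simpa using htU⟩

theorem exists_measurable_partition_measure_lt [OpensMeasurableSpace α] (hε : 0 < ε) :
    ∃ s : ℕ → Set α, (∀ k, MeasurableSet (s k)) ∧ Pairwise (Disjoint on s) ∧
      (∀ k, μ (s k) < ε) ∧ ⋃ k, s k = univ := by
  obtain ⟨s, hso, hsμ, hs⟩ := exists_open_cover_measure_lt μ hε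
  exact ⟨disjointed s, .disjointed fun k => (hso k).measurableSet, disjoint_disjointed s,
    fun k => (measure_mono (disjointed_subset s k)).trans_lt (hsμ k), by rwa [iUnion_disjointed]⟩

end SmallPartition

namespace POVM

variable {X : Type*} [MeasurableSpace X] {H : Type*} [NormedAddCommGroup H]
  [InnerProductSpace ℂ H] [CompleteSpace H] (F : POVM X H)

theorem toFun_iUnion_eq_zero {Δ : ℕ → Set X} (hΔ : ∀ k, MeasurableSet (Δ k))
    (hdisj : Pairwise (Disjoint on Δ)) (h : ∀ k, F.toFun (Δ k) = 0) :
    F.toFun (⋃ k, Δ k) = 0 := by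
  ext ψ
  refine ext_inner_left ℂ fun φ => ?_
  refine tendsto_nhds_unique (F.weak_additive Δ hΔ hdisj φ ψ) ?_
  simp [h]

theorem exists_toFun_ne_zero {Δ : ℕ → Set X} (hΔ : ∀ k, MeasurableSet (Δ k))
    (hdisj : Pairwise (Disjoint on Δ)) (h : F.toFun (⋃ k, Δ k) ≠ 0) :
    ∃ k, F.toFun (Δ k) ≠ 0 := by
  contrapose! h
  exact F.toFun_iUnion_eq_zero hΔ hdisj h

end POVM

/-- No-go theorem for the norm-1 property: a normalized POVM on the Borel sets of `ℝⁿ`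
(`n ≥ 1`, values in a nontrivial complex Hilbert space) which is absolutely continuous
with respect to Lebesgue measure does not have the norm-1 property: some Borel set has a
nonzero value of operator norm strictly less than one. -/
theorem normalized_absolutelyContinuous_not_norm1
    (n : ℕ) (hn : 0 < n)
    {H : Type*} [NormedAddCommGroup H] [InnerProductSpace ℂ H] [CompleteSpace H]
    [Nontrivial H]
    (F : POVM (EuclideanSpace ℝ (Fin n)) H)
    (hnormalized : F.toFun Set.univ = 1) (c : NNReal)
    (habs : ∀ Δ : Set (EuclideanSpace ℝ (Fin n)), MeasurableSet Δ →
      (‖F.toFun Δ‖₊ : ENNReal) ≤ c * volume Δ) :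
    ∃ Δ : Set (EuclideanSpace ℝ (Fin n)),
      MeasurableSet Δ ∧ F.toFun Δ ≠ 0 ∧ ‖F.toFun Δ‖ < 1 := by
  -- in dimension `0` the volume is a Dirac mass, with an atom
  have : Nonempty (Fin n) := ⟨⟨0, hn⟩⟩
  obtain ⟨Δ, hΔ, hdisj, hsmall, hcover⟩ :=
    exists_measurable_partition_measure_lt (volume : Measure (EuclideanSpace ℝ (Fin n)))
      (ε := ((c + 1)⁻¹ : ℝ≥0)) (by simp)
  obtain ⟨k, hk⟩ := F.exists_toFun_ne_zero hΔ hdisj <| by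
    rw [hcover, hnormalized]
    exact one_ne_zero
  refine ⟨Δ k, hΔ k, hk, ?_⟩
  have : (‖F.toFun (Δ k)‖₊ : ℝ≥0∞) < 1 := calc
    _ ≤ c * volume (Δ k) := habs _ (hΔ k)
    _ ≤ c * ((c + 1)⁻¹ : ℝ≥0) := by gcongr; exact (hsmall k).le
    _ < 1 := by
      rw [← ENNReal.coe_mul, ENNReal.coe_lt_one_iff, ← div_eq_mul_inv]
      exact (div_lt_one (by positivity)).mpr (lt_add_one c)
  exact_mod_cast ENNReal.coe_lt_one_iff.mp this
end

section
/- Let μ be the Borel measure on ℝ³ × ℝ³ with density (a, p) ↦ ‖p‖⁻¹ with respect to Lebesgue measure (the invariant measure on the phase space of a massless relativistic particle). Let F be a normalized POVM on the Borel sets of ℝ³ × ℝ³ with values in a complex Hilbert space H such that ‖F(Δ)‖ ≤ c·μ(Δ) for all Borel Δ and some constant c. Then F does not have the norm-1 property: there exists a Borel set Δ with F(Δ) ≠ 0 and ‖F(Δ)‖ < 1. -/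
open MeasureTheory Filter Topology

/-- The invariant measure `dμ = ‖p‖⁻¹ da dp` on the phase space `ℝ³ × ℝ³` of a massless
relativistic particle: Lebesgue measure with density `(a, p) ↦ ‖p‖⁻¹`. -/
noncomputable def masslessPhaseSpaceMeasure :
    Measure (EuclideanSpace ℝ (Fin 3) × EuclideanSpace ℝ (Fin 3)) :=
  volume.withDensity fun ap => (ENNReal.ofReal ‖ap.2‖)⁻¹

/-!
The density `‖p‖⁻¹` is locally integrable on `ℝ³`, so `μ` is a locally finite measure without
atoms, and phase space is therefore a countable disjoint union of Borel sets `Δₙ` with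
`c * μ Δₙ < 1`. Weak countable additivity and `F univ = 1 ≠ 0` force `F Δₙ ≠ 0` for some `n`,
and then `‖F Δₙ‖ ≤ c * μ Δₙ < 1`.
-/

open Set ENNReal

local notation "ℝ³" => EuclideanSpace ℝ (Fin 3)

namespace MeasureTheory

theorem LocallyIntegrable.isLocallyFiniteMeasure_withDensity_ofReal {X : Type*}
    [MeasurableSpace X] [TopologicalSpace X] [OpensMeasurableSpace X] {μ : Measure X}
    {f : X → ℝ} (hf : LocallyIntegrable f μ) :
    IsLocallyFiniteMeasure (μ.withDensity fun x => ENNReal.ofReal (f x)) where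
  finiteAtNhds x := by
    obtain ⟨s, hs, hfs⟩ := hf x
    refine ⟨interior s, interior_mem_nhds.2 hs, ?_⟩
    rw [withDensity_apply _ isOpen_interior.measurableSet]
    exact (hfs.mono_set interior_subset).setLIntegral_lt_top

theorem locallyIntegrable_inv_norm {E : Type*} [NormedAddCommGroup E] [NormedSpace ℝ E]
    [FiniteDimensional ℝ E] [MeasurableSpace E] [BorelSpace E] (μ : Measure E)
    [μ.IsAddHaarMeasure] (hE : 1 < Module.finrank ℝ E) :
    LocallyIntegrable (fun x : E => ‖x‖⁻¹) μ :=
  locallyIntegrable_of_norm_le_rpow hE.le (C := 1) (α := 1) (mod_cast hE)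
    (ae_of_all _ fun x => by simp [Real.rpow_neg_one])
    (continuous_norm.measurable.inv).aestronglyMeasurable

theorem exists_seq_cover_measure_lt {X : Type*} [MetricSpace X] [ProperSpace X]
    [MeasurableSpace X] [OpensMeasurableSpace X] (μ : Measure X) [IsFiniteMeasureOnCompacts μ]
    [NullSingletonClass μ] {η : ℝ≥0∞} (hη : 0 < η) :
    ∃ C : ℕ → Set X, (∀ n, MeasurableSet (C n) ∧ μ (C n) < η) ∧ ⋃ n, C n = univ := by
  have small_ball (x : X) : ∃ r > 0, μ (Metric.closedBall x r) < η := by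
    have hx := tendsto_measure_cthickening_of_isCompact (μ := μ) (isCompact_singleton (x := x))
    rw [measure_singleton] at hx
    obtain ⟨r, hμr, hr⟩ := ((hx.mono_left nhdsWithin_le_nhds).eventually (gt_mem_nhds hη)).and
      (self_mem_nhdsWithin (s := Ioi 0)) |>.exists
    exact ⟨r, hr, by rwa [Metric.cthickening_singleton _ hr.le] at hμr⟩
  choose r hr hμr using small_ball
  obtain ⟨S, hS, hSU⟩ := TopologicalSpace.countable_cover_nhds
    fun x => Metric.closedBall_mem_nhds x (hr x)
  refine (exists_seq_cover_iff_countable (p := fun s => MeasurableSet s ∧ μ s < η)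
    ⟨∅, MeasurableSet.empty, by simpa using hη⟩).2
    ⟨_, hS.image fun x => Metric.closedBall x (r x), ?_, by rwa [sUnion_image]⟩
  rintro _ ⟨x, -, rfl⟩
  exact ⟨Metric.isClosed_closedBall.measurableSet, hμr x⟩

end MeasureTheory

theorem masslessPhaseSpaceMeasure_eq_prod :
    masslessPhaseSpaceMeasure =
      (volume : Measure ℝ³).prod (volume.withDensity fun p : ℝ³ => ENNReal.ofReal ‖p‖⁻¹) := by
  -- `(ENNReal.ofReal ‖p‖)⁻¹` is `∞` at `p = 0`, while `ENNReal.ofReal ‖p‖⁻¹` is `0` there.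
  have inv_ofReal_ae : (fun p : ℝ³ => (ENNReal.ofReal ‖p‖)⁻¹) =ᵐ[volume]
      fun p => ENNReal.ofReal ‖p‖⁻¹ := by
    filter_upwards [Measure.ae_ne volume 0] with p hp
    rw [ENNReal.ofReal_inv_of_pos (norm_pos_iff.2 hp)]
  rw [← withDensity_congr_ae inv_ofReal_ae, prod_withDensity_right (by fun_prop),
    ← Measure.volume_eq_prod]
  rfl

instance : IsLocallyFiniteMeasure masslessPhaseSpaceMeasure := by
  have := (locallyIntegrable_inv_norm (volume : Measure ℝ³)
    (by simp)).isLocallyFiniteMeasure_withDensity_ofReal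
  rw [masslessPhaseSpaceMeasure_eq_prod]
  infer_instance

instance : NullSingletonClass masslessPhaseSpaceMeasure := by
  rw [masslessPhaseSpaceMeasure_eq_prod]
  infer_instance

theorem POVM.toFun_iUnion_eq_zero_s13 {X H : Type*} [MeasurableSpace X] [NormedAddCommGroup H]
    [InnerProductSpace ℂ H] [CompleteSpace H] (F : POVM X H) {D : ℕ → Set X}
    (hD : ∀ n, MeasurableSet (D n)) (hdisj : Pairwise (Function.onFun Disjoint D))
    (hzero : ∀ n, F.toFun (D n) = 0) : F.toFun (⋃ n, D n) = 0 := by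
  ext ψ
  refine ext_inner_left ℂ fun φ => ?_
  have := F.weak_additive D hD hdisj φ ψ
  simp only [hzero, zero_apply, inner_zero_right, Finset.sum_const_zero] at this
  simpa using tendsto_nhds_unique this tendsto_const_nhds

/-- No-go theorem for the norm-1 property on the phase space of a massless relativistic
particle: a normalized POVM on the Borel sets of `ℝ³ × ℝ³` (values in a nontrivial
complex Hilbert space) which is absolutely continuous with respect to the invariant
measure `μ` (density `‖p‖⁻¹`) does not have the norm-1 property. -/
theorem massless_normalized_absolutelyContinuous_not_norm1
    {H : Type*} [NormedAddCommGroup H] [InnerProductSpace ℂ H] [CompleteSpace H]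
    [Nontrivial H]
    (F : POVM (EuclideanSpace ℝ (Fin 3) × EuclideanSpace ℝ (Fin 3)) H)
    (hnormalized : F.toFun Set.univ = 1) (c : NNReal)
    (habs : ∀ Δ : Set (EuclideanSpace ℝ (Fin 3) × EuclideanSpace ℝ (Fin 3)),
      MeasurableSet Δ → (‖F.toFun Δ‖₊ : ENNReal) ≤ c * masslessPhaseSpaceMeasure Δ) :
    ∃ Δ : Set (EuclideanSpace ℝ (Fin 3) × EuclideanSpace ℝ (Fin 3)),
      MeasurableSet Δ ∧ F.toFun Δ ≠ 0 ∧ ‖F.toFun Δ‖ < 1 := by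
  obtain ⟨C, hC, hCU⟩ := exists_seq_cover_measure_lt masslessPhaseSpaceMeasure
    (ENNReal.inv_pos.2 (coe_ne_top (r := c)))
  have hD : ∀ n, MeasurableSet (disjointed C n) := .disjointed fun n => (hC n).1
  obtain ⟨n, hn⟩ : ∃ n, F.toFun (disjointed C n) ≠ 0 := by
    by_contra! h
    have := F.toFun_iUnion_eq_zero_s13 hD (disjoint_disjointed C) h
    rw [iUnion_disjointed, hCU, hnormalized] at this
    exact one_ne_zero this
  refine ⟨disjointed C n, hD n, hn, ?_⟩
  have hsmall : (‖F.toFun (disjointed C n)‖₊ : ℝ≥0∞) < 1 :=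
    calc (‖F.toFun (disjointed C n)‖₊ : ℝ≥0∞)
        ≤ c * masslessPhaseSpaceMeasure (disjointed C n) := habs _ (hD n)
      _ ≤ c * masslessPhaseSpaceMeasure (C n) := by gcongr; exact disjointed_subset C n
      _ < 1 := by
        rw [mul_comm, ← ENNReal.lt_div_iff_mul_lt (.inr (hC n).2.ne_top) (.inl coe_ne_top),
          one_div]
        exact (hC n).2
  exact_mod_cast hsmall
end

section
/- Let e : ℝ³ → ℝ be a bounded probability density (e ≥ 0 almost everywhere, ∫_{ℝ³} e = 1, and e ≤ C almost everywhere for some constant C), and for a Borel set Δ ⊆ ℝ³ let F^Q(Δ) be the operator on L²(ℝ³) of multiplication by χ_Δ * e. Then F^Q does not have the norm-1 property: there exists a Borel set Δ ⊆ ℝ³ such that F^Q(Δ) ≠ 0 but ‖F^Q(Δ)‖ < 1. -/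
/-!
Take for `Δ` a closed ball so small that `C * vol Δ < 1`. Since `0 ≤ e ≤ C`, the smeared
indicator `χ_Δ * e` is bounded by `C * vol Δ`, and this bounds the norm of the multiplication
operator by it. By Fubini its integral is `vol Δ * ∫ e = vol Δ ≠ 0`, so it is not a.e. zero,
and testing the operator against indicators of sets of finite measure shows that it does not
vanish.
-/

open MeasureTheory ENNReal ContinuousLinearMap
open scoped Convolution

namespace MeasureTheory.Lp

variable {α 𝕜 : Type*} [MeasurableSpace α] {μ : Measure α} [NontriviallyNormedField 𝕜]

noncomputable def mulL (g : Lp 𝕜 ∞ μ) : Lp 𝕜 2 μ →L[𝕜] Lp 𝕜 2 μ :=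
  (ContinuousLinearMap.mul 𝕜 𝕜).holderL μ ∞ 2 2 g

lemma coeFn_mulL (g : Lp 𝕜 ∞ μ) (ψ : Lp 𝕜 2 μ) :
    mulL g ψ =ᵐ[μ] fun x => g x * ψ x :=
  (ContinuousLinearMap.mul 𝕜 𝕜).coeFn_holder g ψ

lemma norm_mulL_le (g : Lp 𝕜 ∞ μ) : ‖mulL g‖ ≤ ‖g‖ :=
  ContinuousLinearMap.opNorm_le_bound _ (norm_nonneg g) fun ψ => by
    have := (ContinuousLinearMap.mul 𝕜 𝕜).norm_holder_apply_apply_le (r := 2) g ψ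
    exact this.trans (by gcongr; simp)

lemma norm_le_of_ae_bound_top {E : Type*} [NormedAddCommGroup E] {f : Lp E ∞ μ} {C : ℝ}
    (hC : 0 ≤ C) (hfC : ∀ᵐ x ∂μ, ‖f x‖ ≤ C) : ‖f‖ ≤ C := by
  rw [Lp.norm_def, eLpNorm_exponent_top]
  exact ENNReal.toReal_le_of_le_ofReal hC (eLpNormEssSup_le_of_ae_bound hfC)

lemma ae_eq_zero_of_mulL_eq_zero [SigmaFinite μ] {g : Lp 𝕜 ∞ μ} (hg : mulL g = 0) :
    g =ᵐ[μ] 0 := by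
  refine ae_of_forall_measure_lt_top_ae_restrict _ fun s hs hμs => ?_
  have h := coeFn_mulL g (indicatorConstLp 2 hs hμs.ne (1 : 𝕜))
  rw [hg, zero_apply] at h
  rw [ae_restrict_iff' hs]
  filter_upwards [h, Lp.coeFn_zero 𝕜 2 μ,
    indicatorConstLp_coeFn (p := 2) (hs := hs) (hμs := hμs.ne) (c := (1 : 𝕜))]
    with x h1 h2 h3 hx
  simp only [h3, hx, Set.indicator_of_mem, mul_one] at h1
  exact h1.symm.trans h2

end MeasureTheory.Lp

section IndicatorConvolution

variable {G F : Type*} [AddGroup G] [MeasurableSpace G] {μ : Measure G}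
  [NormedAddCommGroup F] [NormedSpace ℝ F] {s : Set G}

theorem indicator_convolution_apply (hs : MeasurableSet s) (e : G → F) (x : G) :
    (s.indicator 1 ⋆[lsmul ℝ ℝ, μ] e) x = ∫ q in s, e (x - q) ∂μ := by
  rw [convolution_lsmul, ← integral_indicator hs]
  congr 1 with q
  by_cases hq : q ∈ s <;> simp [hq]

variable [MeasurableAdd₂ G] [MeasurableNeg G] [μ.IsAddRightInvariant]

theorem norm_indicator_convolution_le [SFinite μ] (hs : MeasurableSet s) (hμs : μ s < ∞)
    {e : G → F} {C : ℝ} (heC : ∀ᵐ y ∂μ, ‖e y‖ ≤ C) (x : G) :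
    ‖(s.indicator 1 ⋆[lsmul ℝ ℝ, μ] e) x‖ ≤ C * μ.real s := by
  rw [indicator_convolution_apply hs]
  exact norm_setIntegral_le_of_norm_le_const_ae hμs <| ae_restrict_of_ae <|
    (quasiMeasurePreserving_sub_left_of_right_invariant μ x).ae heC

theorem integral_indicator_convolution [SFinite μ] [CompleteSpace F] (hs : MeasurableSet s)
    (hμs : μ s ≠ ∞) {e : G → F} (he : Integrable e μ) :
    ∫ x, (s.indicator 1 ⋆[lsmul ℝ ℝ, μ] e) x ∂μ = μ.real s • ∫ x, e x ∂μ := by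
  rw [integral_convolution _ ((integrable_indicator_iff hs).2 (integrableOn_const hμs)) he,
    integral_indicator_one hs]
  rfl

theorem exists_mulL_convolution_ne_zero_norm_lt_one [SigmaFinite μ] {e : G → ℝ}
    {C : ℝ} (he : Integrable e μ) (he_integral_ne : ∫ x, e x ∂μ ≠ 0) (heC : ∀ᵐ y ∂μ, ‖e y‖ ≤ C)
    (hs : MeasurableSet s) (hμs_pos : 0 < μ s) (hμs : μ s < ∞) (hCs : C * μ.real s < 1) :
    ∃ T : Lp ℂ 2 μ →L[ℂ] Lp ℂ 2 μ,
      (∀ ψ : Lp ℂ 2 μ,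
        T ψ =ᵐ[μ] fun x => (((∫ q in s, e (x - q) ∂μ) : ℝ) : ℂ) * ψ x) ∧
        T ≠ 0 ∧ ‖T‖ < 1 := by
  set f := s.indicator 1 ⋆[lsmul ℝ ℝ, μ] e
  have hf_int : Integrable f μ :=
    ((integrable_indicator_iff hs).2 (integrableOn_const hμs.ne)).integrable_convolution _ he
  have hf_bound (x : G) : ‖(f x : ℂ)‖ ≤ C * μ.real s := by
    simpa using norm_indicator_convolution_le hs hμs heC x
  set g : Lp ℂ ∞ μ := (memLp_top_of_bound
    (Complex.continuous_ofReal.comp_aestronglyMeasurable hf_int.aestronglyMeasurable) _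
    (.of_forall hf_bound)).toLp
  have hg : g =ᵐ[μ] fun x => (f x : ℂ) := MemLp.coeFn_toLp _
  refine ⟨Lp.mulL g, fun ψ => ?_, fun hT => ?_, ?_⟩
  · filter_upwards [Lp.coeFn_mulL g ψ, hg] with x hTψ hgx
    rw [hTψ, hgx, ← indicator_convolution_apply (μ := μ) hs]
  · have hf_zero : f =ᵐ[μ] 0 := by
      filter_upwards [Lp.ae_eq_zero_of_mulL_eq_zero hT, hg] with x h0 hgx
      simpa [hgx] using h0
    have h_integral := integral_indicator_convolution hs hμs.ne he
    rw [integral_congr_ae hf_zero, Pi.zero_def, integral_zero, eq_comm, smul_eq_mul] at h_integral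
    exact mul_ne_zero (ENNReal.toReal_pos hμs_pos.ne' hμs.ne).ne' he_integral_ne h_integral
  · calc ‖Lp.mulL g‖ ≤ ‖g‖ := Lp.norm_mulL_le g
      _ ≤ C * μ.real s := Lp.norm_le_of_ae_bound_top ((norm_nonneg _).trans (hf_bound 0))
          (hg.mono fun x hx => hx ▸ hf_bound x)
      _ < 1 := hCs

end IndicatorConvolution

theorem exists_pos_measure_closedBall_lt {α : Type*} [MetricSpace α] [ProperSpace α]
    [MeasurableSpace α] [OpensMeasurableSpace α] (μ : Measure α) [IsFiniteMeasureOnCompacts μ]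
    [NullSingletonClass μ] (x : α) {ε : ℝ≥0∞} (hε : 0 < ε) :
    ∃ r > 0, μ (Metric.closedBall x r) < ε := by
  have h := tendsto_measure_cthickening_of_isCompact (μ := μ) (isCompact_singleton (x := x))
  rw [measure_singleton] at h
  obtain ⟨r, hμr, hr⟩ := ((h.eventually (gt_mem_nhds hε)).filter_mono nhdsWithin_le_nhds).and
    (self_mem_nhdsWithin (s := Set.Ioi (0 : ℝ))) |>.exists
  exact ⟨r, hr, by rwa [← Metric.cthickening_singleton x (le_of_lt hr)]⟩

/-- The unsharp position observable does not have the norm-1 property: for a bounded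
probability density `e` on `ℝ³` (with `e ≤ C` a.e.) there is a Borel set `Δ ⊆ ℝ³` such
that the operator `F^Q(Δ)` on `L²(ℝ³)` of multiplication by the convolution `χ_Δ * e`,
`(χ_Δ * e)(x) = ∫_Δ e (x - q) dq`, is nonzero but has operator norm strictly
less than one. -/
theorem unsharpPosition_not_norm1
    (e : EuclideanSpace ℝ (Fin 3) → ℝ) (C : NNReal)
    (he0 : ∀ᵐ x ∂(volume : Measure (EuclideanSpace ℝ (Fin 3))), 0 ≤ e x)
    (he1 : (∫ x : EuclideanSpace ℝ (Fin 3), e x) = 1)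
    (heC : ∀ᵐ x ∂(volume : Measure (EuclideanSpace ℝ (Fin 3))), e x ≤ C) :
    ∃ Δ : Set (EuclideanSpace ℝ (Fin 3)), MeasurableSet Δ ∧
      ∃ T : Lp ℂ 2 (volume : Measure (EuclideanSpace ℝ (Fin 3))) →L[ℂ]
            Lp ℂ 2 (volume : Measure (EuclideanSpace ℝ (Fin 3))),
        (∀ ψ : Lp ℂ 2 (volume : Measure (EuclideanSpace ℝ (Fin 3))),
          (T ψ : EuclideanSpace ℝ (Fin 3) → ℂ)
            =ᵐ[volume] fun x => (((∫ q in Δ, e (x - q)) : ℝ) : ℂ) * ψ x) ∧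
        T ≠ 0 ∧ ‖T‖ < 1 := by
  have he_integral_ne : ∫ x, e x ≠ 0 := he1 ▸ one_ne_zero
  have heC' : ∀ᵐ x ∂volume, ‖e x‖ ≤ C := by
    filter_upwards [he0, heC] with x h0 hC
    rwa [Real.norm_of_nonneg h0]
  have hε : (0 : ℝ) < 1 / (C + 1) := by positivity
  obtain ⟨r, hr, hΔ⟩ := exists_pos_measure_closedBall_lt volume (0 : EuclideanSpace ℝ (Fin 3))
    (ENNReal.ofReal_pos.2 hε)
  have hCΔ : C * volume.real (Metric.closedBall (0 : EuclideanSpace ℝ (Fin 3)) r) < 1 :=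
    calc _ ≤ (C : ℝ) * (1 / (C + 1)) := by
          gcongr; exact (ENNReal.toReal_lt_of_lt_ofReal hΔ).le
      _ < 1 := by rw [mul_one_div, div_lt_one (by positivity)]; linarith
  exact ⟨_, measurableSet_closedBall,
    exists_mulL_convolution_ne_zero_norm_lt_one (Integrable.of_integral_ne_zero he_integral_ne)
      he_integral_ne heC' measurableSet_closedBall (Metric.measure_closedBall_pos _ _ hr)
      (hΔ.trans ofReal_lt_top) hCΔ⟩
end
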